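/- In the setting above, if ∏_{j=1}^l u_j^{γ_j} = ∏_{j=1}^l γ_j^{γ_j}, then the hypersurface {F_u = 0} ⊂ (ℂ^×)^d has exactly one singular point. -/

import Mathlib

/-!
A point `x` of the torus is singular exactly when `(u_j x^{m_j})_j` is an affine relation among
the exponents `m_j` over `ℂ`. The integer affine relations are `ℤγ`, hence the complex ones are
`ℂγ`, and the singular points are the solutions of `x^{m_j} = c γ_j / u_j` with `c ≠ 0`.
Dividing by the equation for `j = 0` leaves `x^{m_j - m_0} = w_j := (γ_j / u_j) / (γ_0 / u_0)`.
Since the `m_j - m_0` span `ℤ^d`, this system has at most one solution, and it has one exactly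
when `w` respects every integer relation among the `m_j - m_0`; this reduces to
`∏ (γ_j / u_j)^{γ_j} = 1`, which is the discriminant condition.
-/

open Finset Submodule

section TorusMonomial

variable {G : Type*} [CommGroup G] {ι κ : Type*} [Fintype ι] [Fintype κ]

theorem prod_zpow_eq_zpow_sum {α : Type*} (s : Finset α) (f : α → ℤ) (g : G) :
    ∏ i ∈ s, g ^ f i = g ^ ∑ i ∈ s, f i :=
  cons_induction (by simp) (fun _ _ _ h ↦ by rw [prod_cons, sum_cons, h, zpow_add]) s

def torusMonomial (z : ι → G) (v : ι → ℤ) : G := ∏ i, z i ^ v i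

theorem torusMonomial_add (z : ι → G) (v w : ι → ℤ) :
    torusMonomial z (v + w) = torusMonomial z v * torusMonomial z w := by
  simp [torusMonomial, zpow_add, prod_mul_distrib]

theorem torusMonomial_sub (z : ι → G) (v w : ι → ℤ) :
    torusMonomial z (v - w) = torusMonomial z v / torusMonomial z w := by
  rw [eq_div_iff_mul_eq', ← torusMonomial_add, sub_add_cancel]

theorem torusMonomial_zsmul (z : ι → G) (n : ℤ) (v : ι → ℤ) :
    torusMonomial z (n • v) = torusMonomial z v ^ n := by
  simp [torusMonomial, ← prod_zpow, ← zpow_mul, mul_comm]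

theorem torusMonomial_div (z z' : ι → G) (v : ι → ℤ) :
    torusMonomial (z / z') v = torusMonomial z v / torusMonomial z' v := by
  simp [torusMonomial, div_zpow, prod_div_distrib]

theorem torusMonomial_const (g : G) (v : ι → ℤ) :
    torusMonomial (fun _ => g) v = g ^ ∑ i, v i :=
  prod_zpow_eq_zpow_sum _ _ _

@[simp]
theorem torusMonomial_single [DecidableEq ι] (z : ι → G) (i : ι) :
    torusMonomial z (Pi.single i 1) = z i := by
  simp [torusMonomial, Pi.single_apply]

theorem torusMonomial_torusMonomial (w : κ → G) (a : ι → κ → ℤ) (v : ι → ℤ) :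
    torusMonomial (fun i => torusMonomial w (a i)) v = torusMonomial w (∑ i, v i • a i) := by
  simp only [torusMonomial, ← prod_zpow, ← zpow_mul, Finset.sum_apply, ← prod_zpow_eq_zpow_sum,
    Pi.smul_apply, smul_eq_mul, mul_comm]
  exact prod_comm

theorem eq_one_of_torusMonomial_eq_one {S : Set (ι → ℤ)} (hS : span ℤ S = ⊤) {z : ι → G}
    (hz : ∀ v ∈ S, torusMonomial z v = 1) : z = 1 := by
  classical
  have h : ∀ v ∈ span ℤ S, torusMonomial z v = 1 := fun v hv => by
    induction hv using span_induction with
    | mem v hv => exact hz v hv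
    | zero => simp [torusMonomial]
    | add v w _ _ hv hw => rw [torusMonomial_add, hv, hw, one_mul]
    | smul n v _ hv => rw [torusMonomial_zsmul, hv, one_zpow]
  funext i
  simpa using h _ (hS ▸ mem_top : Pi.single i 1 ∈ span ℤ S)

theorem exists_torusMonomial_eq [DecidableEq κ] {e : κ → ι → ℤ} (he : span ℤ (Set.range e) = ⊤)
    {w : κ → G} (hw : ∀ r : κ → ℤ, ∑ j, r j • e j = 0 → torusMonomial w r = 1) :
    ∃ z : ι → G, ∀ j, torusMonomial z (e j) = w j := by
  classical
  choose a ha using fun i => (mem_span_range_iff_exists_fun ℤ).1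
    (he ▸ mem_top : (Pi.single i 1 : ι → ℤ) ∈ span ℤ (Set.range e))
  -- `a i` writes the `i`-th unit vector in terms of the `e j`, and `s - δ_k` is a relation.
  refine ⟨fun i => torusMonomial w (a i), fun k => ?_⟩
  set s := ∑ i, e k i • a i
  have hs : ∑ j, (s - Pi.single k 1 : κ → ℤ) j • e j = 0 := by
    have hse : ∑ j, s j • e j = e k := by
      simp only [s, Finset.sum_apply, Pi.smul_apply, smul_eq_mul, sum_smul, mul_smul]
      rw [sum_comm]
      simp only [← smul_sum, ha]
      exact (pi_eq_sum_univ' _).symm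
    simp only [Pi.sub_apply, sub_smul, sum_sub_distrib, hse]
    simp [Pi.single_apply]
  calc torusMonomial (fun i => torusMonomial w (a i)) (e k)
      = torusMonomial w (s - Pi.single k 1) * torusMonomial w (Pi.single k 1) := by
        rw [torusMonomial_torusMonomial, ← torusMonomial_add, sub_add_cancel]
    _ = w k := by rw [hw _ hs, one_mul, torusMonomial_single]

@[simp]
theorem Units.val_torusMonomial {M : Type*} [DivisionCommMonoid M] (z : ι → Mˣ) (v : ι → ℤ) :
    ((torusMonomial z v : Mˣ) : M) = ∏ i, (z i : M) ^ v i := by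
  simp [torusMonomial, Units.val_zpow_eq_zpow_val]

end TorusMonomial

section AffineRelation

variable {ι κ : Type*} [Fintype κ]

def IsAffineRelation {R : Type*} [CommRing R] (m : κ → ι → ℤ) (r : κ → R) : Prop :=
  ∑ j, r j = 0 ∧ ∀ i, ∑ j, r j * m j i = 0

variable {m : κ → ι → ℤ} {γ : κ → ℤ}

theorem IsAffineRelation.exists_eq_rat_mul
    (hrel : ∀ r : κ → ℤ, IsAffineRelation m r → ∃ c : ℤ, r = c • γ) {r : κ → ℚ}
    (hr : IsAffineRelation m r) : ∃ c : ℚ, ∀ j, r j = c * γ j := by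
  obtain ⟨⟨b, hb⟩, hbr⟩ := IsLocalization.exist_integer_multiples_of_finite (nonZeroDivisors ℤ) r
  choose z hz using hbr
  simp only [algebraMap_int_eq, eq_intCast, zsmul_eq_mul] at hz
  have hb0 : (b : ℚ) ≠ 0 := by exact_mod_cast nonZeroDivisors.ne_zero hb
  have hzr : IsAffineRelation m z := by
    refine ⟨?_, fun i => ?_⟩ <;> apply Int.cast_injective (α := ℚ) <;> push_cast
    · simp [hz, ← mul_sum, hr.1]
    · simp [hz, mul_assoc, ← mul_sum, hr.2 i]
  obtain ⟨c, hc⟩ := hrel z hzr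
  refine ⟨c / b, fun j => ?_⟩
  have hzj := hz j
  simp only [hc, Pi.smul_apply, smul_eq_mul, Int.cast_mul] at hzj
  field_simp
  linarith

theorem IsAffineRelation.mul_eq_mul {K : Type*} [Field K] [CharZero K]
    (hrel : ∀ r : κ → ℤ, IsAffineRelation m r → ∃ c : ℤ, r = c • γ) {t : κ → K}
    (ht : IsAffineRelation m t) (j k : κ) : (γ k : K) * t j = γ j * t k := by
  rw [← sub_eq_zero]
  -- A `ℚ`-linear functional turns `t` into a rational relation, which is a multiple of `γ`.
  refine (Module.forall_dual_apply_eq_zero_iff ℚ _).1 fun φ => ?_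
  have hφ_int : ∀ (x : K) (n : ℤ), φ (x * n) = φ x * n := fun x n => by
    rw [mul_comm, ← zsmul_eq_mul, map_zsmul, zsmul_eq_mul, mul_comm]
  have hφ : IsAffineRelation m (fun j => φ (t j)) :=
    ⟨by rw [← map_sum, ht.1, map_zero],
      fun i => by simp only [← hφ_int, ← map_sum, ht.2 i, map_zero]⟩
  obtain ⟨c, hc⟩ := hφ.exists_eq_rat_mul hrel
  rw [map_sub, mul_comm, hφ_int, mul_comm (γ j : K), hφ_int, hc, hc]
  ring

theorem isAffineRelation_iff_exists_eq_mul {K : Type*} [Field K] [CharZero K]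
    (hrel : ∀ r : κ → ℤ, IsAffineRelation m r ↔ ∃ c : ℤ, r = c • γ) {k : κ} (hγ : γ k ≠ 0)
    {t : κ → K} : IsAffineRelation m t ↔ ∃ c : K, ∀ j, t j = c * γ j := by
  constructor
  · intro ht
    refine ⟨t k / γ k, fun j => ?_⟩
    have := ht.mul_eq_mul (fun r => (hrel r).1) j k
    field_simp
    linear_combination this
  · rintro ⟨c, hc⟩
    obtain ⟨h1, h2⟩ := (hrel γ).2 ⟨1, (one_smul _ _).symm⟩
    refine ⟨?_, fun i => ?_⟩ <;> simp only [hc, mul_assoc, ← mul_sum] <;> norm_cast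
    · simp [h1]
    · exact mul_eq_zero_of_right c (by exact_mod_cast h2 i)

theorem isAffineRelation_sub_smul_single [DecidableEq κ] {r : κ → ℤ} (k : κ)
    (hr : ∑ j, r j • (m j - m k) = 0) :
    IsAffineRelation m (r - (∑ j, r j) • Pi.single k 1) := by
  refine ⟨by simp [sum_sub_distrib, Pi.single_apply], fun i => ?_⟩
  simpa [Finset.sum_apply, mul_sub, sub_mul, sum_sub_distrib, ← sum_mul, Pi.single_apply]
    using congrFun hr i

end AffineRelation

section TorusPoint

variable {ι κ : Type*} [Fintype ι] [Fintype κ] {m : κ → ι → ℤ}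

theorem existsUnique_torusMonomial_eq_mul {G : Type*} [CommGroup G] [DecidableEq κ] {k : κ}
    (hspan : span ℤ (Set.range fun j => m j - m k) = ⊤) {a : κ → G}
    (ha : ∀ r : κ → ℤ, IsAffineRelation m r → torusMonomial a r = 1) :
    ∃! z : ι → G, ∃ c, ∀ j, torusMonomial z (m j) = c * a j := by
  obtain ⟨z, hz⟩ : ∃ z : ι → G, ∀ j, torusMonomial z (m j - m k) = a j / a k := by
    refine exists_torusMonomial_eq hspan fun r hr => ?_
    have := ha _ (isAffineRelation_sub_smul_single k hr)
    rwa [torusMonomial_sub, torusMonomial_zsmul, torusMonomial_single, div_eq_one,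
      ← torusMonomial_const, ← div_eq_one, ← torusMonomial_div] at this
  obtain ⟨c, hc⟩ : ∃ c, ∀ j, torusMonomial z (m j) = c * a j := ⟨torusMonomial z (m k) / a k,
    fun j => by
      rw [← sub_add_cancel (m j) (m k), torusMonomial_add, hz]
      simp only [div_eq_mul_inv]
      ac_rfl⟩
  refine ⟨z, ⟨c, hc⟩, fun z' ⟨c', hc'⟩ => ?_⟩
  rw [← div_eq_one]
  refine eq_one_of_torusMonomial_eq_one hspan ?_
  rintro _ ⟨j, rfl⟩
  simp [torusMonomial_div, torusMonomial_sub, hc, hc']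

theorem existsUnique_prod_zpow_eq_mul {K : Type*} [Field K] [DecidableEq κ] {k : κ}
    (hspan : span ℤ (Set.range fun j => m j - m k) = ⊤) {a : κ → K} (ha0 : ∀ j, a j ≠ 0)
    (ha : ∀ r : κ → ℤ, IsAffineRelation m r → ∏ j, a j ^ r j = 1) :
    ∃! x : ι → K, (∀ i, x i ≠ 0) ∧ ∃ c : K, ∀ j, ∏ i, x i ^ m j i = c * a j := by
  set A : κ → Kˣ := fun j => Units.mk0 (a j) (ha0 j)
  obtain ⟨z, ⟨c, hz⟩, huniq⟩ := existsUnique_torusMonomial_eq_mul hspan (a := A)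
    fun r hr => Units.ext (by simpa [A] using ha r hr)
  refine ⟨fun i => z i, ⟨fun i => (z i).ne_zero, c, fun j => ?_⟩, ?_⟩
  · simpa [A] using congrArg Units.val (hz j)
  rintro y ⟨hy0, c', hy⟩
  have hc' : c' ≠ 0 := fun hc => prod_ne_zero_iff.2 (fun i _ => zpow_ne_zero _ (hy0 i))
    ((hy k).trans (by rw [hc, zero_mul]))
  have := huniq (fun i => Units.mk0 (y i) (hy0 i))
    ⟨Units.mk0 c' hc', fun j => Units.ext (by simpa [A] using hy j)⟩
  funext i
  simpa using congrArg (fun z => (z i : K)) this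

end TorusPoint

theorem circuit_unique_singular_point_general (d : ℕ) (γ : Fin (d + 2) → ℤ)
    (hγ0 : ∀ j, γ j ≠ 0)
    (m : Fin (d + 2) → Fin d → ℤ)
    (hrel : ∀ r : Fin (d + 2) → ℤ,
      ((∑ j, r j = 0) ∧ (∀ i, ∑ j, r j * m j i = 0)) ↔ ∃ c : ℤ, r = c • γ)
    (hspan : ∀ k : Fin (d + 2),
      Submodule.span ℤ {v : Fin d → ℤ | ∃ j, v = m j - m k} = ⊤)
    (u : Fin (d + 2) → ℂ) (hu : ∀ j, u j ≠ 0)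
    (hdisc : (∏ j, u j ^ γ j) = (∏ j, (γ j : ℂ) ^ γ j)) :
    ∃! x : Fin d → ℂ, (∀ i, x i ≠ 0) ∧
      (∑ j, u j * ∏ i, x i ^ m j i) = 0 ∧
      ∀ i, (∑ j, (m j i : ℂ) * (u j * ∏ i', x i' ^ m j i')) = 0 := by
  have hγ : ∀ j, (γ j : ℂ) ≠ 0 := fun j => Int.cast_ne_zero.mpr (hγ0 j)
  have hspan0 : span ℤ (Set.range fun j => m j - m 0) = ⊤ := by
    rw [← hspan 0]
    congr
    ext
    simp [eq_comm]
  have hsing : ∀ x : Fin d → ℂ, ((∑ j, u j * ∏ i, x i ^ m j i) = 0 ∧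
      ∀ i, (∑ j, (m j i : ℂ) * (u j * ∏ i', x i' ^ m j i')) = 0) ↔
      ∃ c : ℂ, ∀ j, ∏ i, x i ^ m j i = c * (γ j / u j) := fun x => by
    simp only [mul_comm (m _ _ : ℂ)]
    refine (isAffineRelation_iff_exists_eq_mul hrel (hγ0 0)).trans ?_
    simp only [mul_div_assoc', eq_div_iff (hu _), mul_comm (u _)]
  simp only [hsing]
  refine existsUnique_prod_zpow_eq_mul hspan0 (fun j => div_ne_zero (hγ j) (hu j)) fun r hr => ?_
  obtain ⟨c, rfl⟩ := (hrel r).1 hr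
  have hprod : ∏ j, (u j : ℂ) ^ γ j ≠ 0 := prod_ne_zero_iff.2 fun j _ => zpow_ne_zero _ (hu j)
  simp only [Pi.smul_apply, smul_eq_mul, mul_comm c, zpow_mul, prod_zpow, div_zpow,
    prod_div_distrib, ← hdisc]
  exact div_self (zpow_ne_zero c hprod)

/-- **Unique singular point on the discriminant.**
In the setting of the circuit hypersurface `{F_u = 0} ⊂ (ℂ^×)^d`, if
`∏ u_j^{γ_j} = ∏ γ_j^{γ_j}`, then there is exactly one singular point, i.e.
exactly one `x` in the torus with `F_u(x) = 0` and all logarithmic partials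
`∑_j m_{ij} u_j x^{m_j}` vanishing. -/
theorem circuit_unique_singular_point (d : ℕ) (γ : Fin (d + 2) → ℤ)
    (hγ0 : ∀ j, γ j ≠ 0) (hsum : ∑ j, γ j = 0)
    (hgcd : Finset.univ.gcd γ = 1)
    (m : Fin (d + 2) → Fin d → ℤ)
    (hrel : ∀ r : Fin (d + 2) → ℤ,
      ((∑ j, r j = 0) ∧ (∀ i, ∑ j, r j * m j i = 0)) ↔ ∃ c : ℤ, r = c • γ)
    (hspan : ∀ k : Fin (d + 2),
      Submodule.span ℤ {v : Fin d → ℤ | ∃ j, v = m j - m k} = ⊤)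
    (u : Fin (d + 2) → ℂ) (hu : ∀ j, u j ≠ 0)
    (hdisc : (∏ j, u j ^ γ j) = (∏ j, (γ j : ℂ) ^ γ j)) :
    ∃! x : Fin d → ℂ, (∀ i, x i ≠ 0) ∧
      (∑ j, u j * ∏ i, x i ^ m j i) = 0 ∧
      ∀ i, (∑ j, (m j i : ℂ) * (u j * ∏ i', x i' ^ m j i')) = 0 :=
  circuit_unique_singular_point_general d γ hγ0 m hrel hspan u hu hdisc
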